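/- Let H be a complex Hilbert space and let A, B be positive invertible bounded operators on H. Then for every v ∈ (0,1), the weighted operator identric mean satisfies I_v(A,B) = I(A∇_v B, A) ♯_v I(A∇_v B, B). -/

import Mathlib

/-- Scalar weighted logarithmic mean `L_v(a,b)`, extended by `L_v(a,a) = a`. -/
noncomputable def wLogScalar (v a b : ℝ) : ℝ :=
  if a = b then a else
    (1 / (Real.log a - Real.log b)) *
      (((1 - v) / v) * (a - a ^ (1 - v) * b ^ v) + (v / (1 - v)) * (a ^ (1 - v) * b ^ v - b))

/-- Scalar weighted identric mean `I_v(a,b)`, extended by `I_v(a,a) = a`. -/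
noncomputable def wIdScalar (v a b : ℝ) : ℝ :=
  if a = b then a else
    Real.exp (-1) *
      ((1 - v) * a + v * b) ^
        ((1 - 2 * v) * ((1 - v) * a + v * b) / (v * (1 - v) * (b - a))) *
      (b ^ (v * b / (1 - v)) / a ^ ((1 - v) * a / v)) ^ (b - a)⁻¹

variable {H : Type*} [NormedAddCommGroup H] [InnerProductSpace ℂ H] [CompleteSpace H]

/-- The operator mean `m_f(A,B) = A^{1/2} f(A^{-1/2} B A^{-1/2}) A^{1/2}` associated to a
function `f : (0,∞) → ℝ` with `f(1) = 1`, via the continuous functional calculus. -/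
noncomputable def opMeanOf (f : ℝ → ℝ) (A B : H →L[ℂ] H) : H →L[ℂ] H :=
  cfc Real.sqrt A *
    cfc f (Ring.inverse (cfc Real.sqrt A) * B * Ring.inverse (cfc Real.sqrt A)) *
      cfc Real.sqrt A

/-- The weighted operator arithmetic mean `A ∇_v B = (1-v)A + vB`. -/
noncomputable def opWArith (v : ℝ) (A B : H →L[ℂ] H) : H →L[ℂ] H :=
  (1 - v : ℝ) • A + v • B

/-- The weighted operator geometric mean `A ♯_v B = A^{1/2}(A^{-1/2}BA^{-1/2})^v A^{1/2}`. -/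
noncomputable def opWGeom (v : ℝ) (A B : H →L[ℂ] H) : H →L[ℂ] H :=
  opMeanOf (fun x => x ^ v) A B

/-- The operator logarithmic mean, with representing function `f_L(x) = (x-1)/log x`. -/
noncomputable def opLog (A B : H →L[ℂ] H) : H →L[ℂ] H :=
  opMeanOf (fun x => if x = 1 then 1 else (x - 1) / Real.log x) A B

/-- The operator identric mean, with representing function `f_I(x) = e⁻¹ x^{x/(x-1)}`. -/
noncomputable def opId (A B : H →L[ℂ] H) : H →L[ℂ] H :=
  opMeanOf (fun x => if x = 1 then 1 else Real.exp (-1) * x ^ (x / (x - 1))) A B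

/-- The weighted operator logarithmic mean, with representing function `F_{L_v}(x) = L_v(1,x)`. -/
noncomputable def opWLog (v : ℝ) (A B : H →L[ℂ] H) : H →L[ℂ] H :=
  opMeanOf (fun x => wLogScalar v 1 x) A B

/-- The weighted operator identric mean, with representing function `F_{I_v}(x) = I_v(1,x)`. -/
noncomputable def opWId (v : ℝ) (A B : H →L[ℂ] H) : H →L[ℂ] H :=
  opMeanOf (fun x => wIdScalar v 1 x) A B

/-!
Put `C = A^{-1/2} B A^{-1/2}`, so that `A`, `B` and `A ∇_v B` are `A^{1/2} g(C) A^{1/2}` for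
`g = 1`, `id` and `1 - v + v • id`. An operator mean `m_f` is invariant under congruence
`X ↦ R X R*` by an invertible `R`: the square roots of `X` and of `R X R*` differ by a unitary
factor, which commutes with the functional calculus. On two functions `g(C)`, `h(C)` of one
positive operator, `m_f` is the function `g · f(h / g)` of `C`. Hence both sides of the identity are
of the form `A^{1/2} φ(C) A^{1/2}`, and it reduces to the scalar identity
`I_v(1, x) = I(1 ∇_v x, 1) ♯_v I(1 ∇_v x, x)`, which is checked on logarithms.
-/

open Real Ring

lemma IsUnit.mul_eq_one_comm {M : Type*} [Monoid M] {u w : M} (hu : IsUnit u) (h : u * w = 1) :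
    w * u = 1 := by
  obtain ⟨U, rfl⟩ := hu
  rw [← Units.mul_eq_one_iff_inv_eq.mp h, U.inv_mul]

section CStarAlgebra

variable {𝒜 : Type*} [CStarAlgebra 𝒜]

lemma cfc_unitary_conj (u : unitary 𝒜) (f : ℝ → ℝ) (a : 𝒜) :
    cfc f ((u : 𝒜) * a * star (u : 𝒜)) = u * cfc f a * star (u : 𝒜) := by
  set φ := Unitary.conjStarAlgAut ℝ 𝒜 u
  have hφ : Continuous φ := by
    change Continuous fun x : 𝒜 => (u : 𝒜) * x * star (u : 𝒜)
    fun_prop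
  change cfc f (φ a) = φ (cfc f a)
  by_cases ha : IsSelfAdjoint a
  · by_cases hf : ContinuousOn f (spectrum ℝ a)
    · exact (StarAlgHomClass.map_cfc φ f a (hφa := ha.map φ)).symm
    · have hspec : spectrum ℝ (φ a) = spectrum ℝ a := AlgEquiv.spectrum_eq φ a
      rw [cfc_apply_of_not_continuousOn _ hf, cfc_apply_of_not_continuousOn _ (hspec ▸ hf),
        map_zero]
  · have hφa : ¬ IsSelfAdjoint (φ a) := fun h => ha (by simpa using h.map φ.symm)
    rw [cfc_apply_of_not_predicate _ ha, cfc_apply_of_not_predicate _ hφa, map_zero]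

noncomputable def invSqrtConj (a b : 𝒜) : 𝒜 := (cfc Real.sqrt a)⁻¹ʳ * b * (cfc Real.sqrt a)⁻¹ʳ

lemma isSelfAdjoint_inverse_cfc_sqrt (a : 𝒜) : IsSelfAdjoint (cfc Real.sqrt a)⁻¹ʳ :=
  (cfc_predicate _ a : IsSelfAdjoint (cfc Real.sqrt a)).ringInverse

variable [PartialOrder 𝒜] [StarOrderedRing 𝒜]

lemma cfc_real_sqrt_eq_sqrt {a : 𝒜} (ha : 0 ≤ a) : cfc Real.sqrt a = CFC.sqrt a := by
  rw [CFC.sqrt_eq_real_sqrt a ha, cfcₙ_eq_cfc]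

lemma IsStrictlyPositive.isUnit_cfc_sqrt {a : 𝒜} (ha : IsStrictlyPositive a) :
    IsUnit (cfc Real.sqrt a) :=
  cfc_real_sqrt_eq_sqrt ha.nonneg ▸ ha.isUnit_cfcSqrt

lemma invSqrtConj_nonneg (a : 𝒜) {b : 𝒜} (hb : 0 ≤ b) : 0 ≤ invSqrtConj a b := by
  simpa only [invSqrtConj, (isSelfAdjoint_inverse_cfc_sqrt a).star_eq] using
    star_right_conjugate_nonneg hb (cfc Real.sqrt a)⁻¹ʳ

lemma IsStrictlyPositive.invSqrtConj {a b : 𝒜} (ha : IsStrictlyPositive a)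
    (hb : IsStrictlyPositive b) : IsStrictlyPositive (invSqrtConj a b) := by
  simpa only [_root_.invSqrtConj, (isSelfAdjoint_inverse_cfc_sqrt a).star_eq] using
    ha.isUnit_cfc_sqrt.ringInverse.isStrictlyPositive_star_right_conjugate_iff.2 hb

lemma cfc_sqrt_mul_cfc_affine_invSqrtConj_mul_cfc_sqrt (α β : ℝ) {a b : 𝒜}
    (ha : IsStrictlyPositive a) (hb : IsSelfAdjoint b) :
    cfc Real.sqrt a * cfc (fun x => α + β * x) (invSqrtConj a b) * cfc Real.sqrt a
      = α • a + β • b := by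
  have hc : IsSelfAdjoint (invSqrtConj a b) := by
    simpa only [invSqrtConj, (isSelfAdjoint_inverse_cfc_sqrt a).star_eq] using
      hb.conjugate (cfc Real.sqrt a)⁻¹ʳ
  have hs := ha.isUnit_cfc_sqrt
  rw [cfc_const_add α (fun x => β * x) _, cfc_const_mul_id β _, Algebra.algebraMap_eq_smul_one,
    invSqrtConj]
  simp only [mul_add, add_mul, mul_smul_comm, smul_mul_assoc, mul_one, mul_assoc,
    mul_inverse_cancel_left _ _ hs, inverse_mul_cancel _ hs]
  rw [cfc_real_sqrt_eq_sqrt ha.nonneg, CFC.sqrt_mul_sqrt_self a ha.nonneg]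

lemma star_inverse_sqrt_mul_mul_sqrt (c r a : 𝒜) :
    star ((CFC.sqrt c)⁻¹ʳ * r * CFC.sqrt a) = CFC.sqrt a * star r * (CFC.sqrt c)⁻¹ʳ := by
  simp only [star_mul, ← inverse_star, (CFC.sqrt_nonneg a).isSelfAdjoint.star_eq,
    (CFC.sqrt_nonneg c).isSelfAdjoint.star_eq, mul_assoc]

lemma inverse_sqrt_conj_mul_mul_sqrt_mem_unitary {a r : 𝒜} (ha : IsStrictlyPositive a)
    (hr : IsUnit r) : (CFC.sqrt (r * a * star r))⁻¹ʳ * r * CFC.sqrt a ∈ unitary 𝒜 := by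
  have hra := hr.isStrictlyPositive_star_right_conjugate_iff.2 ha
  have htt : CFC.sqrt (r * a * star r) * CFC.sqrt (r * a * star r)
      = r * (CFC.sqrt a * CFC.sqrt a) * star r := by
    rw [CFC.sqrt_mul_sqrt_self a ha.nonneg, CFC.sqrt_mul_sqrt_self _ hra.nonneg]
  have hs := ha.isUnit_cfcSqrt
  have ht := hra.isUnit_cfcSqrt
  have hu_star := star_inverse_sqrt_mul_mul_sqrt (r * a * star r) r a
  generalize CFC.sqrt (r * a * star r) = t at *
  generalize CFC.sqrt a = s at *
  have hu : t⁻¹ʳ * r * s * star (t⁻¹ʳ * r * s) = 1 := by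
    calc t⁻¹ʳ * r * s * star (t⁻¹ʳ * r * s) = t⁻¹ʳ * (r * (s * s) * star r) * t⁻¹ʳ := by
          rw [hu_star]; simp only [mul_assoc]
      _ = 1 := by
          rw [← htt, ← mul_assoc, mul_inverse_cancel_right _ _ ht, inverse_mul_cancel _ ht]
  exact Unitary.mem_iff.2 ⟨((ht.ringInverse.mul hr).mul hs).mul_eq_one_comm hu, hu⟩

end CStarAlgebra

/-- The scalar mean with representing function `f`; `opMeanOf f` is its operator version. -/
noncomputable def meanOf (f : ℝ → ℝ) (a b : ℝ) : ℝ := a * f (b / a)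

lemma meanOf_pos {f : ℝ → ℝ} (hf : ∀ x, 0 < x → 0 < f x) {a b : ℝ} (ha : 0 < a) (hb : 0 < b) :
    0 < meanOf f a b :=
  mul_pos ha (hf _ (div_pos hb ha))

lemma ContinuousOn.meanOf {f g h : ℝ → ℝ} {s : Set ℝ} (hf : ContinuousOn f (Set.Ioi 0))
    (hg : ContinuousOn g s) (hh : ContinuousOn h s) (hg_pos : ∀ x ∈ s, 0 < g x)
    (hh_pos : ∀ x ∈ s, 0 < h x) : ContinuousOn (fun x => meanOf f (g x) (h x)) s :=
  hg.mul (hf.comp (hh.div hg fun x hx => (hg_pos x hx).ne') fun x hx =>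
    div_pos (hh_pos x hx) (hg_pos x hx))

theorem opMeanOf_conj (f : ℝ → ℝ) {a r : H →L[ℂ] H} (b : H →L[ℂ] H) (ha : IsStrictlyPositive a)
    (hr : IsUnit r) :
    opMeanOf f (r * a * star r) (r * b * star r) = r * opMeanOf f a b * star r := by
  have hra := hr.isStrictlyPositive_star_right_conjugate_iff.2 ha
  have hu := inverse_sqrt_conj_mul_mul_sqrt_mem_unitary ha hr
  have hs := ha.isUnit_cfcSqrt
  have ht := hra.isUnit_cfcSqrt
  have hu_star := star_inverse_sqrt_mul_mul_sqrt (r * a * star r) r a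
  simp only [opMeanOf, cfc_real_sqrt_eq_sqrt ha.nonneg, cfc_real_sqrt_eq_sqrt hra.nonneg]
  generalize CFC.sqrt (r * a * star r) = t at *
  generalize CFC.sqrt a = s at *
  have hconj : t⁻¹ʳ * (r * b * star r) * t⁻¹ʳ
      = (t⁻¹ʳ * r * s) * (s⁻¹ʳ * b * s⁻¹ʳ) * star (t⁻¹ʳ * r * s) := by
    rw [hu_star]
    simp only [mul_assoc, mul_inverse_cancel_left _ _ hs, inverse_mul_cancel_left _ _ hs]
  rw [hconj, cfc_unitary_conj ⟨_, hu⟩, hu_star]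
  simp only [mul_assoc, mul_inverse_cancel_left _ _ ht, inverse_mul_cancel _ ht, mul_one]

theorem opMeanOf_cfc_cfc (f g h : ℝ → ℝ) {c : H →L[ℂ] H} (hc : IsSelfAdjoint c)
    (hg : ContinuousOn g (spectrum ℝ c)) (hh : ContinuousOn h (spectrum ℝ c))
    (hg_pos : ∀ x ∈ spectrum ℝ c, 0 < g x) (hh_pos : ∀ x ∈ spectrum ℝ c, 0 < h x)
    (hf : ContinuousOn f (Set.Ioi 0)) :
    opMeanOf f (cfc g c) (cfc h c) = cfc (fun x => meanOf f (g x) (h x)) c := by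
  have hsqrt_ne : ∀ x ∈ spectrum ℝ c, √(g x) ≠ 0 := fun x hx => (sqrt_pos.2 (hg_pos x hx)).ne'
  have hsqrt : ContinuousOn (fun x => √(g x)) (spectrum ℝ c) := hg.sqrt
  have hsqrt_inv : ContinuousOn (fun x => (√(g x))⁻¹) (spectrum ℝ c) := hsqrt.inv₀ hsqrt_ne
  have hquot : ContinuousOn (fun x => h x / g x) (spectrum ℝ c) :=
    hh.div hg fun x hx => (hg_pos x hx).ne'
  have hquot_pos : Set.MapsTo (fun x => h x / g x) (spectrum ℝ c) (Set.Ioi 0) :=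
    fun x hx => div_pos (hh_pos x hx) (hg_pos x hx)
  have hs : cfc Real.sqrt (cfc g c) = cfc (fun x => √(g x)) c := (cfc_comp' Real.sqrt g c).symm
  have hsi : (cfc (fun x => √(g x)) c)⁻¹ʳ = cfc (fun x => (√(g x))⁻¹) c :=
    (cfc_inv (fun x => √(g x)) c hsqrt_ne).symm
  have hmid : cfc (fun x => (√(g x))⁻¹) c * cfc h c * cfc (fun x => (√(g x))⁻¹) c
      = cfc (fun x => h x / g x) c := by
    rw [← cfc_mul _ _ c hsqrt_inv hh, ← cfc_mul (fun x => (√(g x))⁻¹ * h x) _ c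
      (hsqrt_inv.mul hh) hsqrt_inv]
    refine cfc_congr fun x hx => ?_
    rw [← inv_mul_eq_div, ← sqrt_inv]
    linear_combination h x * mul_self_sqrt (inv_nonneg.2 (hg_pos x hx).le)
  have hfq : ContinuousOn (fun x => f (h x / g x)) (spectrum ℝ c) := hf.comp hquot hquot_pos
  rw [opMeanOf, hs, hsi, hmid,
    ← cfc_comp' f _ c (hf.mono (Set.mapsTo_iff_image_subset.1 hquot_pos)),
    ← cfc_mul _ _ c hsqrt hfq,
    ← cfc_mul (fun x => √(g x) * f (h x / g x)) _ c (hsqrt.mul hfq) hsqrt]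
  refine cfc_congr fun x hx => ?_
  rw [meanOf]
  linear_combination f (h x / g x) * mul_self_sqrt (hg_pos x hx).le

theorem opMeanOf_sandwich_cfc (f g h : ℝ → ℝ) {s c : H →L[ℂ] H} (hs : IsSelfAdjoint s)
    (hsu : IsUnit s) (hc : IsSelfAdjoint c) (hg : ContinuousOn g (spectrum ℝ c))
    (hh : ContinuousOn h (spectrum ℝ c)) (hg_pos : ∀ x ∈ spectrum ℝ c, 0 < g x)
    (hh_pos : ∀ x ∈ spectrum ℝ c, 0 < h x) (hf : ContinuousOn f (Set.Ioi 0)) :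
    opMeanOf f (s * cfc g c * s) (s * cfc h c * s)
      = s * cfc (fun x => meanOf f (g x) (h x)) c * s := by
  have hgc : IsStrictlyPositive (cfc g c) := (cfc_isStrictlyPositive_iff g c).2 hg_pos
  simpa only [hs.star_eq, opMeanOf_cfc_cfc f g h hc hg hh hg_pos hh_pos hf]
    using opMeanOf_conj f (cfc h c) hgc hsu

section opWArith

variable (f : ℝ → ℝ) {a b : H →L[ℂ] H} {v : ℝ}

theorem opMeanOf_opWArith_sandwich_cfc (h : ℝ → ℝ) (hv : v ∈ Set.Ioo 0 1)
    (ha : IsStrictlyPositive a) (hb : 0 ≤ b) (hh : ContinuousOn h (spectrum ℝ (invSqrtConj a b)))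
    (hh_pos : ∀ x ∈ spectrum ℝ (invSqrtConj a b), 0 < h x) (hf : ContinuousOn f (Set.Ioi 0)) :
    opMeanOf f (opWArith v a b) (cfc Real.sqrt a * cfc h (invSqrtConj a b) * cfc Real.sqrt a)
      = cfc Real.sqrt a * cfc (fun x => meanOf f (1 - v + v * x) (h x)) (invSqrtConj a b) *
          cfc Real.sqrt a := by
  have hc := invSqrtConj_nonneg a hb
  rw [opWArith, ← cfc_sqrt_mul_cfc_affine_invSqrtConj_mul_cfc_sqrt (1 - v) v ha hb.isSelfAdjoint]
  exact opMeanOf_sandwich_cfc f _ h (cfc_predicate _ _) ha.isUnit_cfc_sqrt hc.isSelfAdjoint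
    (by fun_prop) hh (fun x hx => by nlinarith [spectrum_nonneg_of_nonneg hc hx, hv.1, hv.2])
    hh_pos hf

theorem opMeanOf_opWArith_left (hv : v ∈ Set.Ioo 0 1) (ha : IsStrictlyPositive a) (hb : 0 ≤ b)
    (hf : ContinuousOn f (Set.Ioi 0)) :
    opMeanOf f (opWArith v a b) a = cfc Real.sqrt a *
      cfc (fun x => meanOf f (1 - v + v * x) 1) (invSqrtConj a b) * cfc Real.sqrt a := by
  have ha' : cfc Real.sqrt a * cfc (fun _ : ℝ => (1 : ℝ)) (invSqrtConj a b) * cfc Real.sqrt a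
      = a := by
    simpa using cfc_sqrt_mul_cfc_affine_invSqrtConj_mul_cfc_sqrt 1 0 ha hb.isSelfAdjoint
  rw [← opMeanOf_opWArith_sandwich_cfc f _ hv ha hb (by fun_prop) (fun _ _ => one_pos) hf, ha']

theorem opMeanOf_opWArith_right (hv : v ∈ Set.Ioo 0 1) (ha : IsStrictlyPositive a)
    (hb : IsStrictlyPositive b) (hf : ContinuousOn f (Set.Ioi 0)) :
    opMeanOf f (opWArith v a b) b = cfc Real.sqrt a *
      cfc (fun x => meanOf f (1 - v + v * x) x) (invSqrtConj a b) * cfc Real.sqrt a := by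
  have hb' : cfc Real.sqrt a * cfc (fun x : ℝ => x) (invSqrtConj a b) * cfc Real.sqrt a = b := by
    simpa using cfc_sqrt_mul_cfc_affine_invSqrtConj_mul_cfc_sqrt 0 1 ha hb.isSelfAdjoint
  rw [← opMeanOf_opWArith_sandwich_cfc f _ hv ha hb.nonneg (by fun_prop)
    (fun _ => (ha.invSqrtConj hb).spectrum_pos) hf, hb']

end opWArith

/-- The representing function `f_I` of `opId`. -/
noncomputable def identricFun (x : ℝ) : ℝ :=
  if x = 1 then 1 else exp (-1) * x ^ (x / (x - 1))

/-- The singularity of `f_I` at `1` is removable: `log x / (x - 1)` is the slope of `log` at `1`. -/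
lemma identricFun_eq_exp_dslope {x : ℝ} (hx : 0 < x) :
    identricFun x = exp (x * dslope log 1 x - 1) := by
  rcases eq_or_ne x 1 with rfl | hx1
  · simp [identricFun, dslope_same]
  · rw [identricFun, if_neg hx1, dslope_of_ne _ hx1, slope_def_field, log_one, sub_zero,
      rpow_def_of_pos hx, ← exp_add]
    ring_nf

lemma identricFun_pos {x : ℝ} (hx : 0 < x) : 0 < identricFun x :=
  identricFun_eq_exp_dslope hx ▸ exp_pos _

lemma continuousOn_identricFun : ContinuousOn identricFun (Set.Ioi 0) := by
  have hslope : ContinuousOn (dslope log 1) (Set.Ioi 0) :=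
    (continuousOn_dslope (Ioi_mem_nhds one_pos)).2
      ⟨continuousOn_log.mono fun x hx => (Set.mem_Ioi.1 hx).ne', differentiableAt_log one_ne_zero⟩
  exact ((continuousOn_id.mul hslope).sub continuousOn_const).rexp.congr
    fun x hx => identricFun_eq_exp_dslope hx

lemma wIdScalar_one_eq {v x : ℝ} (hv : v ∈ Set.Ioo 0 1) (hx : 0 < x) :
    wIdScalar v 1 x = meanOf (· ^ v) (meanOf identricFun (1 - v + v * x) 1)
      (meanOf identricFun (1 - v + v * x) x) := by
  obtain ⟨hv0, hv1⟩ := hv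
  rcases eq_or_ne x 1 with rfl | hx1
  · simp [wIdScalar, meanOf, identricFun]
  simp only [meanOf]
  set G := 1 - v + v * x with hG_def
  have hG : 0 < G := by nlinarith
  have hG1 : G ≠ 1 := fun h => hx1 (mul_left_cancel₀ hv0.ne' (by linarith))
  have hGx : x ≠ G := fun h => hx1 (mul_left_cancel₀ (sub_ne_zero.2 hv1.ne') (by linarith))
  have h1G : 1 / G ≠ 1 := by rwa [Ne, div_eq_one_iff_eq hG.ne', eq_comm]
  have hxG : x / G ≠ 1 := by rwa [Ne, div_eq_one_iff_eq hG.ne']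
  rw [identricFun_eq_exp_dslope (by positivity), identricFun_eq_exp_dslope (by positivity),
    dslope_of_ne _ h1G, dslope_of_ne _ hxG, slope_def_field, slope_def_field,
    mul_div_mul_left _ _ hG.ne', ← exp_sub, ← exp_mul, mul_assoc, ← exp_add]
  rw [wIdScalar, if_neg (Ne.symm hx1), mul_one, one_rpow, div_one, ← rpow_mul hx.le,
    rpow_def_of_pos hG, rpow_def_of_pos hx, ← hG_def]
  rw [← exp_add, ← exp_add, log_div one_ne_zero hG.ne', log_div hx.ne' hG.ne', log_one,
    show ∀ e, G * exp e = exp (log G + e) from fun e => by rw [exp_add, exp_log hG]]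
  congr 1
  field_simp
  ring

/-- For positive invertible operators `A, B` on a complex Hilbert space and `v ∈ (0,1)`:
`I_v(A,B) = I(A∇_v B, A) ♯_v I(A∇_v B, B)`. -/
theorem opWId_eq_wGeom_opId (A B : H →L[ℂ] H)
    (hA : 0 ≤ A) (hB : 0 ≤ B) (hAu : IsUnit A) (hBu : IsUnit B)
    (v : ℝ) (hv : v ∈ Set.Ioo (0 : ℝ) 1) :
    opWId v A B = opWGeom v (opId (opWArith v A B) A) (opId (opWArith v A B) B) := by
  have hA_pos : IsStrictlyPositive A := IsStrictlyPositive.iff_of_unital.2 ⟨hA, hAu⟩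
  have hB_pos : IsStrictlyPositive B := IsStrictlyPositive.iff_of_unital.2 ⟨hB, hBu⟩
  have hX := opMeanOf_opWArith_left identricFun hv hA_pos hB continuousOn_identricFun
  have hY := opMeanOf_opWArith_right identricFun hv hA_pos hB_pos continuousOn_identricFun
  have hspec : ∀ x ∈ spectrum ℝ (invSqrtConj A B), 0 < x :=
    fun _ => (hA_pos.invSqrtConj hB_pos).spectrum_pos
  have hG : ∀ x ∈ spectrum ℝ (invSqrtConj A B), 0 < 1 - v + v * x :=
    fun x hx => by nlinarith [hspec x hx, hv.1, hv.2]
  set S := cfc Real.sqrt A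
  set C := invSqrtConj A B
  calc opWId v A B = S * cfc (fun x => wIdScalar v 1 x) C * S := rfl
    _ = S * cfc (fun x => meanOf (· ^ v) (meanOf identricFun (1 - v + v * x) 1)
          (meanOf identricFun (1 - v + v * x) x)) C * S := by
      rw [cfc_congr fun x hx => wIdScalar_one_eq hv (hspec x hx)]
    _ = opMeanOf (· ^ v) (S * cfc (fun x => meanOf identricFun (1 - v + v * x) 1) C * S)
          (S * cfc (fun x => meanOf identricFun (1 - v + v * x) x) C * S) := by
      refine (opMeanOf_sandwich_cfc _ _ _ (cfc_predicate _ _) hA_pos.isUnit_cfc_sqrt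
        (hA_pos.invSqrtConj hB_pos).isSelfAdjoint
        (continuousOn_identricFun.meanOf (by fun_prop) (by fun_prop) hG fun _ _ => one_pos)
        (continuousOn_identricFun.meanOf (by fun_prop) (by fun_prop) hG hspec)
        (fun x hx => meanOf_pos (fun _ => identricFun_pos) (hG x hx) one_pos)
        (fun x hx => meanOf_pos (fun _ => identricFun_pos) (hG x hx) (hspec x hx))
        fun x hx => (continuousAt_rpow_const x v (Or.inl (ne_of_gt hx))).continuousWithinAt).symm
    _ = _ := by rw [← hX, ← hY]; rfl
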